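/- (Arc-length weighted trace estimate; estimates (s2)–(s3) in the proof of Lemma 1, single-rectangle form.) Under the stated assumptions, the integral of ψ² over the graph Γ_g with respect to 1-dimensional Hausdorff measure satisfies ∫_{Γ_g} ψ² dH¹ ≤ 2·√(1+L²) · ( ∫_{Γ_G} ψ² dH¹ + γ ∫_S ‖∇ψ(x)‖² dx ). -/

import Mathlib

/-!
Lipschitz maps enlarge the one-dimensional Hausdorff measure by at most their Lipschitz constant.
Since `t ↦ (t, g t)` is `√(1 + L²)`-Lipschitz, the arc-length integral of `ψ²` over `Γ_g` is at
most `√(1 + L²)` times `∫ ψ(t, g t)² dt`; since the projection `(t, s) ↦ t` is `1`-Lipschitz,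
`∫ ψ(t, G t)² dt` is at most the arc-length integral over `Γ_G`. On each vertical segment from
`(t, g t)` to `(t, G t)`, of length at most `γ`, the fundamental theorem of calculus and
Cauchy–Schwarz give `ψ(t, g t)² ≤ 2 ψ(t, G t)² + 2 γ ∫ ‖∇ψ(t, s)‖² ds`, and Tonelli turns the
`t`-integral of the last term into the area integral over `S`.
-/

open MeasureTheory Set
open scoped NNReal ENNReal

/-- A point of the Euclidean plane given by its two coordinates. -/
noncomputable def pt2 (a b : ℝ) : EuclideanSpace ℝ (Fin 2) :=
  (WithLp.equiv 2 (Fin 2 → ℝ)).symm ![a, b]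

section HausdorffImage

variable {X Y : Type*} [EMetricSpace X] [MeasurableSpace X] [BorelSpace X]
  [EMetricSpace Y] [MeasurableSpace Y] [BorelSpace Y]

theorem LipschitzOnWith.lintegral_image_le {K : ℝ≥0} {f : X → Y} {s : Set X}
    (hf : LipschitzOnWith K f s) (hs : MeasurableSet s) {d : ℝ} (hd : 0 ≤ d) (F : Y → ℝ≥0∞) :
    ∫⁻ y in f '' s, F y ∂μH[d] ≤ (K : ℝ≥0∞) ^ d * ∫⁻ x in s, F (f x) ∂μH[d] := by
  set ν := (K : ℝ≥0∞) ^ d • (μH[d] : Measure X).restrict s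
  have hν : (μH[d] : Measure Y).restrict (f '' s) ≤ ν.map f := by
    refine Measure.le_iff.2 fun A hA => ?_
    rw [Measure.restrict_apply hA,
      Measure.map_apply_of_aemeasurable ((hf.continuousOn.aemeasurable hs).smul_measure _) hA,
      Measure.smul_apply, Measure.restrict_apply' hs, smul_eq_mul]
    calc μH[d] (A ∩ f '' s) ≤ μH[d] (f '' (f ⁻¹' A ∩ s)) :=
          measure_mono <| by rintro _ ⟨hyA, x, hx, rfl⟩; exact ⟨x, ⟨hyA, hx⟩, rfl⟩
      _ ≤ _ := (hf.mono inter_subset_right).hausdorffMeasure_image_le hd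
  calc ∫⁻ y in f '' s, F y ∂μH[d] ≤ ∫⁻ y, F y ∂ν.map f := lintegral_mono' hν le_rfl
    _ ≤ ∫⁻ x, F (f x) ∂ν := lintegral_map_le F f
    _ = _ := lintegral_smul_measure _ _

end HausdorffImage

theorem LipschitzOnWith.integrableOn_image_Icc {X : Type*} [MetricSpace X] [MeasurableSpace X]
    [BorelSpace X] {K : ℝ≥0} {f : ℝ → X} {a b : ℝ} (hf : LipschitzOnWith K f (Icc a b))
    {φ : X → ℝ} (hφ : Continuous φ) : IntegrableOn φ (f '' Icc a b) μH[1] := by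
  have hK : IsCompact (f '' Icc a b) := isCompact_Icc.image_of_continuousOn hf.continuousOn
  refine hφ.continuousOn.integrableOn_of_subset_isCompact hK hK.measurableSet subset_rfl ?_
  refine ((hf.hausdorffMeasure_image_le zero_le_one).trans_lt ?_).ne
  simp [hausdorffMeasure_real, ENNReal.mul_lt_top]

theorem sq_intervalIntegral_le_mul_integral_sq {f : ℝ → ℝ} {a b : ℝ} (hab : a ≤ b)
    (hf : IntervalIntegrable f volume a b)
    (hf2 : IntervalIntegrable (fun x => f x ^ 2) volume a b) :
    (∫ x in a..b, f x) ^ 2 ≤ (b - a) * ∫ x in a..b, f x ^ 2 := by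
  rcases hab.eq_or_lt with rfl | hlt
  · simp
  have hjensen : (⨍ x in a..b, f x) ^ 2 ≤ ⨍ x in a..b, f x ^ 2 := by
    rw [uIoc_of_le hab]
    exact (even_two.convexOn_pow).map_set_average_le (continuous_pow 2).continuousOn
      isClosed_univ (by simp [hlt]) (by simp) (ae_of_all _ fun _ => mem_univ _)
      ((intervalIntegrable_iff_integrableOn_Ioc_of_le hab).1 hf)
      ((intervalIntegrable_iff_integrableOn_Ioc_of_le hab).1 hf2)
  rw [interval_average_eq, interval_average_eq, smul_eq_mul, smul_eq_mul, mul_pow] at hjensen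
  have hba : 0 < b - a := sub_pos.2 hlt
  calc (∫ x in a..b, f x) ^ 2 = (b - a) ^ 2 * ((b - a)⁻¹ ^ 2 * (∫ x in a..b, f x) ^ 2) := by
        field_simp
    _ ≤ (b - a) ^ 2 * ((b - a)⁻¹ * ∫ x in a..b, f x ^ 2) := by gcongr
    _ = (b - a) * ∫ x in a..b, f x ^ 2 := by field_simp

theorem sq_le_two_mul_sq_add_two_mul_integral_deriv_sq {φ φ' : ℝ → ℝ} {a b : ℝ} (hab : a ≤ b)
    (hφ : ∀ x ∈ Icc a b, HasDerivAt φ (φ' x) x) (hφ' : IntervalIntegrable φ' volume a b)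
    (hφ'2 : IntervalIntegrable (fun x => φ' x ^ 2) volume a b) :
    φ a ^ 2 ≤ 2 * φ b ^ 2 + 2 * (b - a) * ∫ x in a..b, φ' x ^ 2 := by
  have hftc : ∫ x in a..b, φ' x = φ b - φ a :=
    intervalIntegral.integral_eq_sub_of_hasDerivAt (by rwa [uIcc_of_le hab]) hφ'
  have hcs := sq_intervalIntegral_le_mul_integral_sq hab hφ' hφ'2
  rw [hftc] at hcs
  nlinarith [sq_nonneg (2 * φ b - φ a)]

section RegionBetween

variable {α : Type*} [MeasurableSpace α]

theorem measurableSet_regionBetween_of_continuousOn [TopologicalSpace α]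
    [OpensMeasurableSpace α] {u v : α → ℝ} {s : Set α} (hu : ContinuousOn u s)
    (hv : ContinuousOn v s) (hs : MeasurableSet s) : MeasurableSet (regionBetween u v s) := by
  classical
  have h : regionBetween u v s = regionBetween (s.piecewise u 0) (s.piecewise v 0) s := by
    ext p
    simp +contextual [regionBetween]
  rw [h]
  exact measurableSet_regionBetween (hu.measurable_piecewise continuousOn_const hs)
    (hv.measurable_piecewise continuousOn_const hs) hs

theorem lintegral_regionBetween {μ : Measure α} [SFinite μ] {u v : α → ℝ} {s : Set α}
    (hs : MeasurableSet s) (hR : MeasurableSet (regionBetween u v s))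
    {F : α × ℝ → ℝ≥0∞} (hF : Measurable F) :
    ∫⁻ p in regionBetween u v s, F p ∂μ.prod volume
      = ∫⁻ x in s, (∫⁻ y in Ioo (u x) (v x), F (x, y)) ∂μ := by
  rw [← lintegral_indicator hR, lintegral_prod _ (hF.indicator hR).aemeasurable,
    ← lintegral_indicator hs]
  congr 1 with x
  by_cases hx : x ∈ s
  · rw [indicator_of_mem hx, ← lintegral_indicator measurableSet_Ioo]
    congr 1 with y
    simp [indicator, regionBetween, hx]
  · simp [indicator, regionBetween, hx]

end RegionBetween

theorem ContDiff.continuous_gradient {F : Type*} [NormedAddCommGroup F] [InnerProductSpace ℝ F]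
    [CompleteSpace F] {ψ : F → ℝ} (hψ : ContDiff ℝ 1 ψ) : Continuous (gradient ψ) :=
  (InnerProductSpace.toDual ℝ F).symm.continuous.comp (hψ.continuous_fderiv one_ne_zero)

theorem EuclideanSpace.lipschitzWith_apply {ι : Type*} [Fintype ι] (i : ι) :
    LipschitzWith 1 fun x : EuclideanSpace ℝ ι => x i := by
  have h := (LipschitzWith.eval (α := fun _ : ι => ℝ) i).comp
    (PiLp.lipschitzWith_ofLp 2 fun _ : ι => ℝ)
  rwa [mul_one] at h

@[simp] lemma pt2_apply_zero (a b : ℝ) : pt2 a b 0 = a := rfl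

@[simp] lemma pt2_apply_one (a b : ℝ) : pt2 a b 1 = b := rfl

lemma pt2_eta (x : EuclideanSpace ℝ (Fin 2)) : pt2 (x 0) (x 1) = x := by
  ext i; fin_cases i <;> rfl

lemma dist_pt2 (a b c d : ℝ) :
    dist (pt2 a b) (pt2 c d) = √(dist a c ^ 2 + dist b d ^ 2) := by
  simp [EuclideanSpace.dist_eq, Fin.sum_univ_two]

lemma continuous_pt2 : Continuous fun p : ℝ × ℝ => pt2 p.1 p.2 :=
  (PiLp.continuous_toLp 2 _).comp <| continuous_pi fun i => by fin_cases i <;> simp <;> fun_prop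

lemma hasDerivAt_pt2_right (t s : ℝ) : HasDerivAt (fun s => pt2 t s) (pt2 0 1) s := by
  have h : (fun s => pt2 t s) = fun s => pt2 t 0 + s • pt2 0 1 := by
    funext s; ext i; fin_cases i <;> simp [pt2]
  rw [h]
  simpa using ((hasDerivAt_id s).smul_const (pt2 0 1)).const_add (pt2 t 0)

lemma lipschitzOnWith_graph {u : ℝ → ℝ} {s : Set ℝ} {L : ℝ}
    (hu : ∀ x ∈ s, ∀ y ∈ s, dist (u x) (u y) ≤ L * dist x y) :
    LipschitzOnWith (√(1 + L ^ 2)).toNNReal (fun t => pt2 t (u t)) s := by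
  refine LipschitzOnWith.of_dist_le_mul fun x hx y hy => ?_
  have hsq : dist (u x) (u y) ^ 2 ≤ L ^ 2 * dist x y ^ 2 := by
    rw [← mul_pow]
    exact pow_le_pow_left₀ dist_nonneg (hu x hx y hy) 2
  rw [dist_pt2, Real.coe_toNNReal _ (Real.sqrt_nonneg _), ← Real.sqrt_sq dist_nonneg,
    ← Real.sqrt_mul (by positivity), Real.sqrt_sq dist_nonneg]
  exact Real.sqrt_le_sqrt (by linarith)

lemma lintegral_le_lintegral_graph {v : ℝ → ℝ} {s : Set ℝ} (hs : IsCompact s)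
    (hv : ContinuousOn v s) (F : EuclideanSpace ℝ (Fin 2) → ℝ≥0∞) :
    ∫⁻ t in s, F (pt2 t (v t)) ≤ ∫⁻ x in (fun t => pt2 t (v t)) '' s, F x ∂μH[1] := by
  have hΓ : IsCompact ((fun t => pt2 t (v t)) '' s) :=
    hs.image_of_continuousOn (continuous_pt2.comp_continuousOn (continuousOn_id.prodMk hv))
  have h := (EuclideanSpace.lipschitzWith_apply 0).lipschitzOnWith.lintegral_image_le
    hΓ.measurableSet zero_le_one fun t => F (pt2 t (v t))
  rw [image_image, hausdorffMeasure_real, ENNReal.coe_one, ENNReal.one_rpow, one_mul] at h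
  simp only [pt2_apply_zero, image_id'] at h
  refine h.trans_eq (setLIntegral_congr_fun hΓ.measurableSet ?_)
  rintro _ ⟨t, -, rfl⟩
  simp

noncomputable def pt2MeasurableEquiv : ℝ × ℝ ≃ᵐ EuclideanSpace ℝ (Fin 2) :=
  MeasurableEquiv.finTwoArrow.symm.trans (MeasurableEquiv.toLp 2 (Fin 2 → ℝ))

lemma pt2MeasurableEquiv_apply (p : ℝ × ℝ) : pt2MeasurableEquiv p = pt2 p.1 p.2 := by
  ext i; fin_cases i <;> rfl

lemma measurePreserving_pt2MeasurableEquiv : MeasurePreserving pt2MeasurableEquiv :=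
  (EuclideanSpace.volume_preserving_symm_measurableEquiv_toLp (Fin 2)).symm.comp
    (volume_preserving_finTwoArrow ℝ).symm

def planeRegionBetween (u v : ℝ → ℝ) (s : Set ℝ) : Set (EuclideanSpace ℝ (Fin 2)) :=
  {x | x 0 ∈ s ∧ x 1 ∈ Ioo (u (x 0)) (v (x 0))}

lemma pt2MeasurableEquiv_image_regionBetween (u v : ℝ → ℝ) (s : Set ℝ) :
    pt2MeasurableEquiv '' regionBetween u v s = planeRegionBetween u v s := by
  ext x
  constructor
  · rintro ⟨p, hp, rfl⟩
    simpa [pt2MeasurableEquiv_apply, regionBetween, planeRegionBetween] using hp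
  · exact fun hx => ⟨(x 0, x 1), hx, by rw [pt2MeasurableEquiv_apply, pt2_eta]⟩

lemma measurableSet_planeRegionBetween {u v : ℝ → ℝ} {s : Set ℝ} (hu : ContinuousOn u s)
    (hv : ContinuousOn v s) (hs : MeasurableSet s) :
    MeasurableSet (planeRegionBetween u v s) := by
  rw [← pt2MeasurableEquiv_image_regionBetween]
  exact pt2MeasurableEquiv.measurableSet_image.2 <|
    measurableSet_regionBetween_of_continuousOn hu hv hs

lemma setLIntegral_planeRegionBetween {u v : ℝ → ℝ} {s : Set ℝ} (hs : MeasurableSet s)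
    (hR : MeasurableSet (regionBetween u v s)) {F : EuclideanSpace ℝ (Fin 2) → ℝ≥0∞}
    (hF : Measurable F) :
    ∫⁻ x in planeRegionBetween u v s, F x = ∫⁻ t in s, ∫⁻ y in Ioo (u t) (v t), F (pt2 t y) := by
  rw [← pt2MeasurableEquiv_image_regionBetween,
    ← measurePreserving_pt2MeasurableEquiv.setLIntegral_comp_emb
      pt2MeasurableEquiv.measurableEmbedding, Measure.volume_eq_prod]
  refine (lintegral_regionBetween (F := fun p => F (pt2MeasurableEquiv p)) hs hR
    (hF.comp pt2MeasurableEquiv.measurable)).trans ?_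
  simp only [pt2MeasurableEquiv_apply]

lemma integrableOn_planeRegionBetween {u v : ℝ → ℝ} {a b : ℝ} (hu : ContinuousOn u (Icc a b))
    (hv : ContinuousOn v (Icc a b)) {φ : EuclideanSpace ℝ (Fin 2) → ℝ} (hφ : Continuous φ) :
    IntegrableOn φ (planeRegionBetween u v (Ioo a b)) := by
  obtain ⟨m, hm⟩ := isCompact_Icc.bddBelow_image hu
  obtain ⟨M, hM⟩ := isCompact_Icc.bddAbove_image hv
  have hK := ((isCompact_Icc (a := a) (b := b)).prod (isCompact_Icc (a := m) (b := M))).image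
    continuous_pt2
  have hsub :
      planeRegionBetween u v (Ioo a b) ⊆ (fun p => pt2 p.1 p.2) '' (Icc a b ×ˢ Icc m M) := by
    rintro x ⟨hx0, hx1⟩
    have hx0' := Ioo_subset_Icc_self hx0
    exact ⟨(x 0, x 1), ⟨hx0', (hm ⟨_, hx0', rfl⟩).trans hx1.1.le,
      hx1.2.le.trans (hM ⟨_, hx0', rfl⟩)⟩, pt2_eta x⟩
  exact hφ.continuousOn.integrableOn_of_subset_isCompact hK
    (measurableSet_planeRegionBetween (hu.mono Ioo_subset_Icc_self)
      (hv.mono Ioo_subset_Icc_self) measurableSet_Ioo) hsub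
    ((measure_mono hsub).trans_lt hK.measure_lt_top).ne

lemma ofReal_sq_le_vertical_segment {ψ : EuclideanSpace ℝ (Fin 2) → ℝ} (hψ : ContDiff ℝ 1 ψ)
    (t : ℝ) {a b : ℝ} (hab : a ≤ b) :
    ENNReal.ofReal (ψ (pt2 t a) ^ 2) ≤ 2 * ENNReal.ofReal (ψ (pt2 t b) ^ 2)
      + 2 * ENNReal.ofReal (b - a)
        * ∫⁻ s in Ioo a b, ENNReal.ofReal (‖gradient ψ (pt2 t s)‖ ^ 2) := by
  set φ' : ℝ → ℝ := fun s => inner ℝ (gradient ψ (pt2 t s)) (pt2 0 1)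
  have hderiv : ∀ s, HasDerivAt (fun s => ψ (pt2 t s)) (φ' s) s := fun s => by
    rw [show φ' s = fderiv ℝ ψ (pt2 t s) (pt2 0 1) from inner_gradient_left]
    exact ((hψ.differentiable one_ne_zero) _).hasFDerivAt.comp_hasDerivAt s
      (hasDerivAt_pt2_right t s)
  have hgrad : Continuous fun s => gradient ψ (pt2 t s) :=
    hψ.continuous_gradient.comp (continuous_pt2.comp (continuous_const.prodMk continuous_id))
  have hφ' : Continuous φ' := hgrad.inner continuous_const
  have hgrad2 : Continuous fun s => ‖gradient ψ (pt2 t s)‖ ^ 2 := hgrad.norm.pow 2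
  have hφ'_le : ∀ s, φ' s ^ 2 ≤ ‖gradient ψ (pt2 t s)‖ ^ 2 := fun s => by
    have h := abs_real_inner_le_norm (gradient ψ (pt2 t s)) (pt2 0 1)
    rw [show ‖pt2 0 1‖ = 1 by simp [EuclideanSpace.norm_eq, Fin.sum_univ_two], mul_one] at h
    exact sq_le_sq' (abs_le.1 h).1 (abs_le.1 h).2
  have hsegment := sq_le_two_mul_sq_add_two_mul_integral_deriv_sq hab (fun s _ => hderiv s)
    (hφ'.intervalIntegrable a b) ((hφ'.pow 2).intervalIntegrable a b)
  have hmono : ∫ s in a..b, φ' s ^ 2 ≤ ∫ s in a..b, ‖gradient ψ (pt2 t s)‖ ^ 2 :=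
    intervalIntegral.integral_mono_on hab ((hφ'.pow 2).intervalIntegrable a b)
      (hgrad2.intervalIntegrable a b) fun s _ => hφ'_le s
  have hlintegral : ENNReal.ofReal (∫ s in a..b, ‖gradient ψ (pt2 t s)‖ ^ 2)
      = ∫⁻ s in Ioo a b, ENNReal.ofReal (‖gradient ψ (pt2 t s)‖ ^ 2) := by
    rw [intervalIntegral.integral_of_le hab, integral_Ioc_eq_integral_Ioo,
      ofReal_integral_eq_lintegral_ofReal (hgrad2.integrableOn_Icc.mono_set Ioo_subset_Icc_self)
        (ae_of_all _ fun _ => sq_nonneg _)]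
  have hI : 0 ≤ ∫ s in a..b, ‖gradient ψ (pt2 t s)‖ ^ 2 :=
    intervalIntegral.integral_nonneg hab fun _ _ => sq_nonneg _
  calc ENNReal.ofReal (ψ (pt2 t a) ^ 2)
      ≤ ENNReal.ofReal (2 * ψ (pt2 t b) ^ 2
          + 2 * (b - a) * ∫ s in a..b, ‖gradient ψ (pt2 t s)‖ ^ 2) :=
        ENNReal.ofReal_le_ofReal (hsegment.trans (by gcongr))
    _ = _ := by
        rw [ENNReal.ofReal_add (by positivity) (by nlinarith), ENNReal.ofReal_mul zero_le_two,
          ENNReal.ofReal_mul (by nlinarith), ENNReal.ofReal_mul zero_le_two, hlintegral,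
          ENNReal.ofReal_ofNat]

theorem lintegral_sq_lower_graph_le {u v : ℝ → ℝ} {a b γ : ℝ} {K : ℝ≥0}
    (hu : LipschitzOnWith K (fun t => pt2 t (u t)) (Icc a b)) (hv : ContinuousOn v (Icc a b))
    (huv : ∀ t ∈ Icc a b, u t ≤ v t ∧ v t ≤ u t + γ)
    {ψ : EuclideanSpace ℝ (Fin 2) → ℝ} (hψ : ContDiff ℝ 1 ψ) :
    ∫⁻ x in (fun t => pt2 t (u t)) '' Icc a b, ENNReal.ofReal (ψ x ^ 2) ∂μH[1]
      ≤ K * (2 * ∫⁻ x in (fun t => pt2 t (v t)) '' Icc a b, ENNReal.ofReal (ψ x ^ 2) ∂μH[1]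
        + 2 * ENNReal.ofReal γ
          * ∫⁻ x in planeRegionBetween u v (Ioo a b), ENNReal.ofReal (‖gradient ψ x‖ ^ 2)) := by
  set q : EuclideanSpace ℝ (Fin 2) → ℝ≥0∞ := fun x => ENNReal.ofReal (ψ x ^ 2)
  set p : EuclideanSpace ℝ (Fin 2) → ℝ≥0∞ := fun x => ENNReal.ofReal (‖gradient ψ x‖ ^ 2)
  have hu' : ContinuousOn u (Icc a b) :=
    ((continuous_apply 1).comp (PiLp.continuous_ofLp 2 _)).comp_continuousOn hu.continuousOn
  have hq_v : ContinuousOn (fun t => q (pt2 t (v t))) (Icc a b) :=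
    ENNReal.continuous_ofReal.comp_continuousOn <| (hψ.continuous.pow 2).comp_continuousOn <|
      continuous_pt2.comp_continuousOn (continuousOn_id.prodMk hv)
  have hregion : ∫⁻ x in planeRegionBetween u v (Ioo a b), p x
      = ∫⁻ t in Icc a b, ∫⁻ y in Ioo (u t) (v t), p (pt2 t y) := by
    rw [setLIntegral_planeRegionBetween (F := p) measurableSet_Ioo
        (measurableSet_regionBetween_of_continuousOn (hu'.mono Ioo_subset_Icc_self)
          (hv.mono Ioo_subset_Icc_self) measurableSet_Ioo)
        (hψ.continuous_gradient.norm.pow 2).measurable.ennreal_ofReal,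
      Measure.restrict_congr_set Ioo_ae_eq_Icc]
  have hvertical : ∫⁻ t in Icc a b, q (pt2 t (u t))
      ≤ 2 * (∫⁻ t in Icc a b, q (pt2 t (v t)))
        + 2 * ENNReal.ofReal γ * ∫⁻ x in planeRegionBetween u v (Ioo a b), p x := by
    calc ∫⁻ t in Icc a b, q (pt2 t (u t))
        ≤ ∫⁻ t in Icc a b, (2 * q (pt2 t (v t))
            + 2 * ENNReal.ofReal γ * ∫⁻ y in Ioo (u t) (v t), p (pt2 t y)) := by
          refine setLIntegral_mono' measurableSet_Icc fun t ht => ?_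
          calc q (pt2 t (u t)) ≤ 2 * q (pt2 t (v t)) + 2 * ENNReal.ofReal (v t - u t)
                * ∫⁻ y in Ioo (u t) (v t), p (pt2 t y) :=
                ofReal_sq_le_vertical_segment hψ t (huv t ht).1
            _ ≤ _ := by
                gcongr
                linarith [(huv t ht).2]
      _ = _ := by
          rw [lintegral_add_left' ((hq_v.aemeasurable measurableSet_Icc).const_mul 2),
            lintegral_const_mul' _ _ (by finiteness), lintegral_const_mul' _ _ (by finiteness),
            hregion]
  calc ∫⁻ x in (fun t => pt2 t (u t)) '' Icc a b, q x ∂μH[1]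
      ≤ K * ∫⁻ t in Icc a b, q (pt2 t (u t)) := by
        simpa [hausdorffMeasure_real] using hu.lintegral_image_le measurableSet_Icc zero_le_one q
    _ ≤ _ := mul_le_mul_right (hvertical.trans (by
        gcongr
        exact lintegral_le_lintegral_graph isCompact_Icc hv q)) _

theorem arclength_weighted_trace_estimate_general
    (γ T L : ℝ) (hγ : 0 < γ)
    (g G : ℝ → ℝ)
    (hg : ContDiffOn ℝ 1 g (Icc 0 T)) (hG : ContDiffOn ℝ 1 G (Icc 0 T))
    (hgG : ∀ t ∈ Icc (0:ℝ) T, g t ≤ G t ∧ G t ≤ g t + γ)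
    (hg' : ∀ t ∈ Icc (0:ℝ) T, |derivWithin g (Icc 0 T) t| ≤ L)
    (Γg ΓG : Set (EuclideanSpace ℝ (Fin 2)))
    (hΓg : Γg = (fun t => pt2 t (g t)) '' Icc (0:ℝ) T)
    (hΓG : ΓG = (fun t => pt2 t (G t)) '' Icc (0:ℝ) T)
    (S : Set (EuclideanSpace ℝ (Fin 2)))
    (hS : S = {x : EuclideanSpace ℝ (Fin 2) |
        x 0 ∈ Ioo (0:ℝ) T ∧ x 1 ∈ Ioo (g (x 0)) (G (x 0))})
    (ψ : EuclideanSpace ℝ (Fin 2) → ℝ) (hψ : ContDiff ℝ 1 ψ) :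
    (∫ x in Γg, (ψ x)^2 ∂(μH[1]))
      ≤ 2 * Real.sqrt (1 + L^2) *
        ((∫ x in ΓG, (ψ x)^2 ∂(μH[1])) + γ * ∫ x in S, ‖gradient ψ x‖^2) := by
  subst hΓg hΓG hS
  have hg_lip := lipschitzOnWith_graph fun x hx y hy => by
    simpa [dist_eq_norm] using (convex_Icc 0 T).norm_image_sub_le_of_norm_derivWithin_le
      (hg.differentiableOn one_ne_zero) (fun z hz => by simpa using hg' z hz) hy hx
  obtain ⟨K, hG_lip⟩ := hG.exists_lipschitzOnWith one_ne_zero (convex_Icc 0 T) isCompact_Icc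
  have hΓG_int := (lipschitzOnWith_graph hG_lip.dist_le_mul).integrableOn_image_Icc
    (φ := fun x => ψ x ^ 2) (hψ.continuous.pow 2)
  have hS_int := integrableOn_planeRegionBetween hg.continuousOn hG.continuousOn
    (φ := fun x => ‖gradient ψ x‖ ^ 2) (hψ.continuous_gradient.norm.pow 2)
  have key := lintegral_sq_lower_graph_le hg_lip hG.continuousOn hgG hψ
  rw [← ofReal_integral_eq_lintegral_ofReal hΓG_int (ae_of_all _ fun _ => sq_nonneg _),
    ← ofReal_integral_eq_lintegral_ofReal hS_int (ae_of_all _ fun _ => sq_nonneg _)] at key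
  unfold planeRegionBetween at key
  rw [integral_eq_lintegral_of_nonneg_ae (ae_of_all _ fun _ => sq_nonneg _)
    (hψ.continuous.pow 2).aestronglyMeasurable]
  refine ENNReal.toReal_le_of_le_ofReal (by positivity) (key.trans_eq ?_)
  change ENNReal.ofReal √(1 + L ^ 2) * _ = _
  rw [ENNReal.ofReal_mul (by positivity), ENNReal.ofReal_mul zero_le_two,
    ENNReal.ofReal_add (by positivity) (by positivity), ENNReal.ofReal_mul hγ.le,
    ENNReal.ofReal_ofNat]
  ring

/-- Arc-length weighted trace estimate (estimates (s2)–(s3) in the proof of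
Lemma 1, single-rectangle form). -/
theorem arclength_weighted_trace_estimate
    (γ T L : ℝ) (hγ : 0 < γ) (hT : 0 < T) (hL : 0 ≤ L)
    (g G : ℝ → ℝ)
    (hg : ContDiffOn ℝ 1 g (Icc 0 T)) (hG : ContDiffOn ℝ 1 G (Icc 0 T))
    (hgG : ∀ t ∈ Icc (0:ℝ) T, g t ≤ G t ∧ G t ≤ g t + γ)
    (hg' : ∀ t ∈ Icc (0:ℝ) T, |derivWithin g (Icc 0 T) t| ≤ L)
    (Γg ΓG : Set (EuclideanSpace ℝ (Fin 2)))
    (hΓg : Γg = (fun t => pt2 t (g t)) '' Icc (0:ℝ) T)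
    (hΓG : ΓG = (fun t => pt2 t (G t)) '' Icc (0:ℝ) T)
    (S : Set (EuclideanSpace ℝ (Fin 2)))
    (hS : S = {x : EuclideanSpace ℝ (Fin 2) |
        x 0 ∈ Ioo (0:ℝ) T ∧ x 1 ∈ Ioo (g (x 0)) (G (x 0))})
    (ψ : EuclideanSpace ℝ (Fin 2) → ℝ) (hψ : ContDiff ℝ 1 ψ) :
    (∫ x in Γg, (ψ x)^2 ∂(μH[1]))
      ≤ 2 * Real.sqrt (1 + L^2) *
        ((∫ x in ΓG, (ψ x)^2 ∂(μH[1])) + γ * ∫ x in S, ‖gradient ψ x‖^2) :=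
  arclength_weighted_trace_estimate_general γ T L hγ g G hg hG hgG hg' Γg ΓG hΓg hΓG S hS ψ hψ
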